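/- Let R be a commutative Noetherian local ring and B, C semidualizing R-modules such that B is totally C-reflexive. Then Hom_R(B,C) is a semidualizing R-module. -/

import Mathlib

open CategoryTheory

/-- The Ext group `Ext^n_R(M, N)`. -/
noncomputable def ExtMod (R : Type) [CommRing R] (M N : Type) [AddCommGroup M] [Module R M]
    [AddCommGroup N] [Module R N] (n : ℕ) : Type :=
  ((Ext R (ModuleCat R) n).obj (Opposite.op (ModuleCat.of R M))).obj (ModuleCat.of R N)

/-- The Tor group `Tor_n^R(M, N)`. -/
noncomputable def TorMod (R : Type) [CommRing R] (M N : Type) [AddCommGroup M] [Module R M]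
    [AddCommGroup N] [Module R N] (n : ℕ) : Type :=
  ((Tor (ModuleCat R) n).obj (ModuleCat.of R M)).obj (ModuleCat.of R N)

/-- `C` is a semidualizing `R`-module: it is finitely generated, the homothety map
`R → Hom_R(C, C)` is bijective, and `Ext^i_R(C, C) = 0` for all `i ≥ 1`. -/
def IsSemidualizing (R : Type) [CommRing R] (C : Type) [AddCommGroup C] [Module R C] : Prop :=
  Module.Finite R C ∧ Function.Bijective (LinearMap.lsmul R C) ∧
    ∀ n : ℕ, 1 ≤ n → Subsingleton (ExtMod R C C n)

/-- `M` is totally `C`-reflexive: it is finitely generated, the biduality map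
`M → Hom_R(Hom_R(M, C), C)` is bijective, and
`Ext^{≥1}_R(M, C) = 0 = Ext^{≥1}_R(Hom_R(M, C), C)`. -/
def IsTotallyReflexive (R : Type) [CommRing R] (C : Type) [AddCommGroup C] [Module R C]
    (M : Type) [AddCommGroup M] [Module R M] : Prop :=
  Module.Finite R M ∧
  Function.Bijective (LinearMap.id.flip : M →ₗ[R] (M →ₗ[R] C) →ₗ[R] C) ∧
  (∀ n : ℕ, 1 ≤ n → Subsingleton (ExtMod R M C n)) ∧
  (∀ n : ℕ, 1 ≤ n → Subsingleton (ExtMod R (M →ₗ[R] C) C n))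

/-!
`B† = Hom_R(B, C)` is finitely generated because `R` is Noetherian, and biduality `B ≅ B††`
identifies `End_R(B†)` with `End_R(B)` compatibly with homotheties.

For `Ext^{≥1}(B†, B†) = 0`, dualize a projective resolution `P → B` into `C`: as
`Ext^{≥1}(B, C) = 0`, this gives a coresolution `0 → B† → Hom(P₀, C) → Hom(P₁, C) → ⋯`.
Each `Hom(Pⱼ, C)` satisfies `Ext^{≥1}(B†, Hom(Pⱼ, C)) = 0` since `Ext^{≥1}(B†, C) = 0` and `Pⱼ` is
projective, and `Hom(B†, -)` keeps the coresolution exact in positive degrees because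
`Hom(B†, Hom(P, C)) ≅ Hom(P, B††) ≅ Hom(P, B)` and `Ext^{≥1}(B, B) = 0`. Dimension shifting
along the coresolution then kills `Ext^{≥1}(B†, B†)`.
-/

theorem LinearMap.exists_comp_eq_of_exact {R : Type*} [Ring R] {M Y' Y Y'' : Type*}
    [AddCommGroup M] [Module R M] [AddCommGroup Y'] [Module R Y'] [AddCommGroup Y] [Module R Y]
    [AddCommGroup Y''] [Module R Y''] {ι : Y' →ₗ[R] Y} {π : Y →ₗ[R] Y''}
    (hι : Function.Injective ι) (hιπ : Function.Exact ι π) (g : M →ₗ[R] Y) (hg : π ∘ₗ g = 0) :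
    ∃ a : M →ₗ[R] Y', ι ∘ₗ a = g := by
  have hrange : ∀ m, g m ∈ LinearMap.range ι := fun m =>
    (hιπ (g m)).mp (LinearMap.congr_fun hg m)
  refine ⟨(LinearEquiv.ofInjective ι hι).symm.toLinearMap ∘ₗ g.codRestrict _ hrange, ?_⟩
  ext m
  exact congrArg Subtype.val ((LinearEquiv.ofInjective ι hι).apply_symm_apply ⟨g m, hrange m⟩)

section Homothety

variable {R : Type*} [CommRing R] {B C : Type*} [AddCommGroup B] [Module R B]
  [AddCommGroup C] [Module R C]

theorem bijective_lsmul_linearMap_of_bijective_flip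
    (hB : Function.Bijective (LinearMap.lsmul R B))
    (hd : Function.Bijective (LinearMap.id.flip : B →ₗ[R] (B →ₗ[R] C) →ₗ[R] C)) :
    Function.Bijective (LinearMap.lsmul R (B →ₗ[R] C)) := by
  let e : Module.End R B ≃ₗ[R] Module.End R (B →ₗ[R] C) :=
    (LinearEquiv.congrRight (LinearEquiv.ofBijective _ hd)).trans LinearMap.lflip
  have : LinearMap.lsmul R (B →ₗ[R] C) = e.toLinearMap ∘ₗ LinearMap.lsmul R B := by
    ext φ b
    simp [e, LinearEquiv.congrRight]
  rw [this]
  exact e.bijective.comp hB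

end Homothety

namespace CategoryTheory.ProjectiveResolution

variable {R : Type} [CommRing R] {W : Type} [AddCommGroup W] [Module R W]
  (Q : ProjectiveResolution (ModuleCat.of R W))

instance (n : ℕ) : Module.Projective R (Q.complex.X n) := by
  rw [IsProjective.iff_projective]
  exact (inferInstance : Projective (Q.complex.X n))

theorem d_comp_d_hom (n : ℕ) :
    (Q.complex.d (n + 1) n).hom ∘ₗ (Q.complex.d (n + 2) (n + 1)).hom = 0 :=
  congrArg ModuleCat.Hom.hom (Q.complex.d_comp_d _ _ _)

/-- Exactness of `Hom_R(Q, Y)` at `Hom_R(Q_{n+1}, Y)`: every cocycle there is a coboundary. -/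
def HomExactAt (Y : Type) [AddCommGroup Y] [Module R Y] (n : ℕ) : Prop :=
  ∀ f : Q.complex.X (n + 1) →ₗ[R] Y, f ∘ₗ (Q.complex.d (n + 2) (n + 1)).hom = 0 →
    ∃ g : Q.complex.X n →ₗ[R] Y, g ∘ₗ (Q.complex.d (n + 1) n).hom = f

theorem subsingleton_extMod_succ_iff (Y : Type) [AddCommGroup Y] [Module R Y] (n : ℕ) :
    Subsingleton (ExtMod R W Y (n + 1)) ↔ Q.HomExactAt Y n := by
  rw [ExtMod, (Q.isoExt (n + 1) (ModuleCat.of R Y)).toLinearEquiv.toEquiv.subsingleton_congr,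
    ← ModuleCat.isZero_iff_subsingleton, ← HomologicalComplex.exactAt_iff_isZero_homology,
    HomologicalComplex.exactAt_iff' _ n (n + 1) (n + 2) (by simp) (by simp),
    ShortComplex.moduleCat_exact_iff]
  constructor
  · intro h f hf
    obtain ⟨g, hg⟩ := h (ModuleCat.ofHom f) (ModuleCat.hom_ext hf)
    exact ⟨g.hom, congrArg ModuleCat.Hom.hom hg⟩
  · intro h f hf
    obtain ⟨g, hg⟩ := h f.hom (congrArg ModuleCat.Hom.hom hf)
    exact ⟨ModuleCat.ofHom g, ModuleCat.hom_ext hg⟩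

theorem surjective_π_f_zero : Function.Surjective (Q.π.f 0).hom :=
  (ModuleCat.epi_iff_surjective _).mp inferInstance

theorem exact_lcomp_π (Y : Type) [AddCommGroup Y] [Module R Y] :
    Function.Exact (LinearMap.lcomp R Y (Q.π.f 0).hom)
      (LinearMap.lcomp R Y (Q.complex.d 1 0).hom) :=
  LinearMap.exact_lcomp_of_exact_of_surjective Y
    ((ShortComplex.ShortExact.moduleCat_exact_iff_function_exact _).mp Q.exact₀)
    Q.surjective_π_f_zero

noncomputable def linearMapEquivKer (Y : Type) [AddCommGroup Y] [Module R Y] :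
    (W →ₗ[R] Y) ≃ₗ[R] LinearMap.ker (LinearMap.lcomp R Y (Q.complex.d 1 0).hom) :=
  (LinearEquiv.ofInjective _
    (LinearMap.lcomp_injective_of_surjective _ Q.surjective_π_f_zero)).trans
    (LinearEquiv.ofEq _ _ (Q.exact_lcomp_π Y).linearMap_ker_eq.symm)

variable {Q} {Y' Y Y'' : Type} [AddCommGroup Y'] [Module R Y'] [AddCommGroup Y] [Module R Y]
  [AddCommGroup Y''] [Module R Y''] {ι : Y' →ₗ[R] Y} {π : Y →ₗ[R] Y''} {n : ℕ}

theorem HomExactAt.exact_lcomp (h : Q.HomExactAt Y n) :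
    Function.Exact (LinearMap.lcomp R Y (Q.complex.d (n + 1) n).hom)
      (LinearMap.lcomp R Y (Q.complex.d (n + 2) (n + 1)).hom) := by
  intro f
  constructor
  · exact h f
  · rintro ⟨g, rfl⟩
    exact (congrArg (g ∘ₗ ·) (Q.d_comp_d_hom n)).trans (LinearMap.comp_zero g)

theorem HomExactAt.linearMap (h : Q.HomExactAt Y n) (P : Type) [AddCommGroup P] [Module R P]
    [Module.Projective R P] : Q.HomExactAt (P →ₗ[R] Y) n := by
  intro f hf
  let δ := LinearMap.lcomp R Y (Q.complex.d (n + 1) n).hom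
  have hf' (p : P) : f.flip p ∈ LinearMap.range δ :=
    LinearMap.mem_range.mpr <| h (f.flip p) <| by
      ext q; exact LinearMap.congr_fun (LinearMap.congr_fun hf q) p
  obtain ⟨g, hg⟩ := Module.projective_lifting_property δ.rangeRestrict (f.flip.codRestrict _ hf')
    (LinearMap.surjective_rangeRestrict _)
  refine ⟨g.flip, ?_⟩
  ext q p
  exact LinearMap.congr_fun (congrArg Subtype.val (LinearMap.congr_fun hg p)) q

theorem HomExactAt.exists_lcomp_comp_eq {M : Type} [AddCommGroup M] [Module R M]
    (h : Q.HomExactAt (M →ₗ[R] Y) n) (u : M →ₗ[R] Q.complex.X (n + 1) →ₗ[R] Y)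
    (hu : LinearMap.lcomp R Y (Q.complex.d (n + 2) (n + 1)).hom ∘ₗ u = 0) :
    ∃ v : M →ₗ[R] Q.complex.X n →ₗ[R] Y,
      LinearMap.lcomp R Y (Q.complex.d (n + 1) n).hom ∘ₗ v = u := by
  obtain ⟨g, hg⟩ := h u.flip (by ext q m; exact LinearMap.congr_fun (LinearMap.congr_fun hu m) q)
  exact ⟨g.flip, by ext m q; exact LinearMap.congr_fun (LinearMap.congr_fun hg q) m⟩

/-- The long exact `Ext` sequence at `Ext^{n+1}(W, Y')`, at the cochain level: `hlift` says that
every cocycle `Q_n → Y''` lifts to a cocycle `Q_n → Y`, i.e. `Ext^n(W, Y) → Ext^n(W, Y'')` is onto. -/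
theorem HomExactAt.of_exact_of_lift (hι : Function.Injective ι) (hιπ : Function.Exact ι π)
    (hY : Q.HomExactAt Y n)
    (hlift : ∀ c : Q.complex.X n →ₗ[R] Y'', c ∘ₗ (Q.complex.d (n + 1) n).hom = 0 →
      ∃ b : Q.complex.X n →ₗ[R] Y, π ∘ₗ b = c ∧ b ∘ₗ (Q.complex.d (n + 1) n).hom = 0) :
    Q.HomExactAt Y' n := by
  intro f hf
  obtain ⟨b, hb⟩ := hY (ι ∘ₗ f) (by rw [LinearMap.comp_assoc, hf, LinearMap.comp_zero])
  obtain ⟨b', hb', hb'd⟩ := hlift (π ∘ₗ b) (by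
    rw [LinearMap.comp_assoc, hb, ← LinearMap.comp_assoc, hιπ.linearMap_comp_eq_zero,
      LinearMap.zero_comp])
  obtain ⟨a, ha⟩ := LinearMap.exists_comp_eq_of_exact hι hιπ (b - b') (by
    rw [LinearMap.comp_sub, hb', sub_self])
  refine ⟨a, LinearMap.ext fun q => hι ?_⟩
  have := LinearMap.congr_fun (congrArg (· ∘ₗ (Q.complex.d (n + 1) n).hom) ha) q
  simpa [LinearMap.sub_comp, hb'd, hb] using this

theorem HomExactAt.of_shortExact_zero (hι : Function.Injective ι) (hιπ : Function.Exact ι π)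
    (hY : Q.HomExactAt Y 0) (hπ : ∀ c : W →ₗ[R] Y'', ∃ b : W →ₗ[R] Y, π ∘ₗ b = c) :
    Q.HomExactAt Y' 0 := by
  refine hY.of_exact_of_lift hι hιπ fun c hc => ?_
  obtain ⟨c', rfl⟩ := (Q.exact_lcomp_π Y'' c).mp hc
  obtain ⟨b, rfl⟩ := hπ c'
  exact ⟨b ∘ₗ (Q.π.f 0).hom, rfl, (Q.exact_lcomp_π Y).apply_apply_eq_zero b⟩

theorem HomExactAt.of_shortExact_succ (hι : Function.Injective ι) (hιπ : Function.Exact ι π)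
    (hπ : Function.Surjective π) (hY : Q.HomExactAt Y (n + 1)) (hY'' : Q.HomExactAt Y'' n) :
    Q.HomExactAt Y' (n + 1) := by
  refine hY.of_exact_of_lift hι hιπ fun c hc => ?_
  obtain ⟨c₀, rfl⟩ := hY'' c hc
  obtain ⟨b₀, rfl⟩ := Module.projective_lifting_property π c₀ hπ
  exact ⟨b₀ ∘ₗ (Q.complex.d (n + 1) n).hom, rfl,
    by rw [LinearMap.comp_assoc, Q.d_comp_d_hom, LinearMap.comp_zero]⟩

end CategoryTheory.ProjectiveResolution

section Ext

open ProjectiveResolution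

variable {R : Type} [CommRing R] {W : Type} [AddCommGroup W] [Module R W]

theorem subsingleton_extMod_congr_right {Y Y' : Type} [AddCommGroup Y] [Module R Y]
    [AddCommGroup Y'] [Module R Y'] (e : Y ≃ₗ[R] Y') (n : ℕ) :
    Subsingleton (ExtMod R W Y n) ↔ Subsingleton (ExtMod R W Y' n) :=
  (((Ext R (ModuleCat R) n).obj _).mapIso e.toModuleIso).toLinearEquiv.toEquiv.subsingleton_congr

theorem subsingleton_extMod_linearMap_of_projective {Y : Type} [AddCommGroup Y] [Module R Y]
    (P : Type) [AddCommGroup P] [Module R P] [Module.Projective R P] {n : ℕ}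
    (h : Subsingleton (ExtMod R W Y (n + 1))) :
    Subsingleton (ExtMod R W (P →ₗ[R] Y) (n + 1)) := by
  let Q := ProjectiveResolution.of (ModuleCat.of R W)
  exact (Q.subsingleton_extMod_succ_iff _ n).mpr
    (((Q.subsingleton_extMod_succ_iff Y n).mp h).linearMap P)

theorem subsingleton_extMod_ker_of_coresolution {Y : ℕ → Type} [∀ j, AddCommGroup (Y j)]
    [∀ j, Module R (Y j)] (δ : ∀ j, Y j →ₗ[R] Y (j + 1))
    (hδ : ∀ j, Function.Exact (δ j) (δ (j + 1)))
    (hY : ∀ j n, Subsingleton (ExtMod R W (Y j) (n + 1)))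
    (hW : ∀ j (u : W →ₗ[R] Y (j + 1)), δ (j + 1) ∘ₗ u = 0 → ∃ v, δ j ∘ₗ v = u) (n : ℕ) :
    Subsingleton (ExtMod R W (LinearMap.ker (δ 0)) (n + 1)) := by
  let Q := ProjectiveResolution.of (ModuleCat.of R W)
  let π (j : ℕ) : Y j →ₗ[R] LinearMap.ker (δ (j + 1)) :=
    (δ j).codRestrict _ fun y => (hδ j).apply_apply_eq_zero y
  have hι (j : ℕ) : Function.Injective (LinearMap.ker (δ j)).subtype :=
    Submodule.injective_subtype _
  have hιπ (j : ℕ) : Function.Exact (LinearMap.ker (δ j)).subtype (π j) :=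
    (Submodule.injective_subtype _).comp_exact_iff_exact.mp (LinearMap.exact_subtype_ker_map (δ j))
  have hπ (j : ℕ) : Function.Surjective (π j) := fun ⟨y, hy⟩ =>
    ((hδ j y).mp hy).imp fun _ hx => Subtype.ext hx
  suffices ∀ n j, Q.HomExactAt (LinearMap.ker (δ j)) n from
    (Q.subsingleton_extMod_succ_iff _ n).mpr (this n 0)
  intro n
  induction n with
  | zero =>
    intro j
    refine .of_shortExact_zero (hι j) (hιπ j) ((Q.subsingleton_extMod_succ_iff _ 0).mp (hY j 0))
      fun c => ?_
    obtain ⟨v, hv⟩ := hW j ((LinearMap.ker (δ (j + 1))).subtype ∘ₗ c) (by ext w; exact (c w).2)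
    exact ⟨v, LinearMap.ext fun w => Subtype.ext (LinearMap.congr_fun hv w)⟩
  | succ n ih =>
    intro j
    exact .of_shortExact_succ (hι j) (hιπ j) (hπ j)
      ((Q.subsingleton_extMod_succ_iff _ _).mp (hY j (n + 1))) (ih (j + 1))

end Ext

theorem subsingleton_extMod_linearMap_self {R : Type} [CommRing R] {B C : Type}
    [AddCommGroup B] [Module R B] [AddCommGroup C] [Module R C]
    (hd : Function.Bijective (LinearMap.id.flip : B →ₗ[R] (B →ₗ[R] C) →ₗ[R] C))
    (hBB : ∀ n, Subsingleton (ExtMod R B B (n + 1)))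
    (hBC : ∀ n, Subsingleton (ExtMod R B C (n + 1)))
    (hDC : ∀ n, Subsingleton (ExtMod R (B →ₗ[R] C) C (n + 1))) (n : ℕ) :
    Subsingleton (ExtMod R (B →ₗ[R] C) (B →ₗ[R] C) (n + 1)) := by
  let P := ProjectiveResolution.of (ModuleCat.of R B)
  have hPC (j : ℕ) : P.HomExactAt C j := (P.subsingleton_extMod_succ_iff C j).mp (hBC j)
  have hPB (j : ℕ) : P.HomExactAt ((B →ₗ[R] C) →ₗ[R] C) j :=
    (P.subsingleton_extMod_succ_iff _ j).mp
      ((subsingleton_extMod_congr_right (LinearEquiv.ofBijective _ hd) _).mp (hBB j))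
  let δ (j : ℕ) := LinearMap.lcomp R C (P.complex.d (j + 1) j).hom
  have hδ (j : ℕ) : Function.Exact (δ j) (δ (j + 1)) := (hPC j).exact_lcomp
  have hY (j m : ℕ) : Subsingleton (ExtMod R (B →ₗ[R] C) (P.complex.X j →ₗ[R] C) (m + 1)) :=
    subsingleton_extMod_linearMap_of_projective _ (hDC m)
  have hker := subsingleton_extMod_ker_of_coresolution δ hδ hY
    (fun j => (hPB j).exists_lcomp_comp_eq) n
  exact (subsingleton_extMod_congr_right (P.linearMapEquivKer C) _).mpr hker

theorem hom_semidualizing_of_totallyReflexive_general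
    (R : Type) [CommRing R] [IsNoetherianRing R]
    (B C : Type) [AddCommGroup B] [Module R B] [AddCommGroup C] [Module R C]
    (hB : IsSemidualizing R B) (hC : IsSemidualizing R C)
    (hBC : IsTotallyReflexive R C B) :
    IsSemidualizing R (B →ₗ[R] C) := by
  obtain ⟨hBfin, hBhom, hBext⟩ := hB
  obtain ⟨-, hd, hBCext, hDCext⟩ := hBC
  have hCfin : Module.Finite R C := hC.1
  refine ⟨inferInstance, bijective_lsmul_linearMap_of_bijective_flip hBhom hd, ?_⟩
  intro n hn
  obtain ⟨m, rfl⟩ := Nat.exists_eq_add_of_le' hn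
  exact subsingleton_extMod_linearMap_self hd (fun k => hBext _ k.succ_pos)
    (fun k => hBCext _ k.succ_pos) (fun k => hDCext _ k.succ_pos) m

/-- if `B`, `C` are semidualizing and `B` is totally `C`-reflexive, then
`Hom_R(B, C)` is semidualizing. -/
theorem hom_semidualizing_of_totallyReflexive
    (R : Type) [CommRing R] [IsNoetherianRing R] [IsLocalRing R]
    (B C : Type) [AddCommGroup B] [Module R B] [AddCommGroup C] [Module R C]
    (hB : IsSemidualizing R B) (hC : IsSemidualizing R C)
    (hBC : IsTotallyReflexive R C B) :
    IsSemidualizing R (B →ₗ[R] C) :=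
  hom_semidualizing_of_totallyReflexive_general R B C hB hC hBC
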